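/- Define the symmetric traceless divergence div̂ on smooth maps m : ℝ³ → Sym₀(3) (symmetric traceless 3×3 real matrices) by (div̂ m)ⱼ = Σᵢ ∂ᵢ mᵢⱼ. Let φ₂(m ⊕ n) be the complex symmetric 2-tensor with components (m_{jk} + i n_{jk}) ε_{jab} ε_{kpq} relative to the frame dx^a∧dx^b ⊗ dx^p∧dx^q (summed over repeated indices), and let φ₃(v ⊕ w) have components 2(vⱼ + i wⱼ) ε_{jpq} relative to dx¹∧dx²∧dx³ ⊗ dx^p∧dx^q. Then for all smooth symmetric traceless matrix fields m, n, the first-order operator d_i defined by d_i(u) = Σᵢ dxⁱ ∇_{∂ᵢ} u satisfies d_i(φ₂(m ⊕ n)) = φ₃(div̂ m ⊕ div̂ n). -/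

import Mathlib

/-!
The frames `dx^a∧dx^b ⊗ dx^p∧dx^q` are parallel for the flat connection, so `d_i` only
differentiates the coefficient functions, and the contraction `Σ_{a,b} ε_{iab} ε_{jab} = 2 δ_{ij}`
collapses `Σ_{i,a,b} ε_{iab} ∂ᵢ(u_{jk}) ε_{jab} ε_{kpq}` to `2 Σ_i ∂ᵢ u_{ik} ε_{kpq}`, which is
`2 (div̂ m + i div̂ n)_k ε_{kpq}` for `u = m + i n`.
-/

open scoped ComplexConjugate

/-- The Levi-Civita symbol on `Fin 3`, with `eps 0 1 2 = 1`. -/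
noncomputable def eps (i j k : Fin 3) : ℝ :=
  (((j.val : ℝ) - (i.val : ℝ)) * ((k.val : ℝ) - (j.val : ℝ)) *
    ((k.val : ℝ) - (i.val : ℝ))) / 2

/-- The symmetric traceless divergence `(div̂ m)ⱼ = Σᵢ ∂ᵢ mᵢⱼ`. -/
noncomputable def divHat (m : (Fin 3 → ℝ) → Matrix (Fin 3) (Fin 3) ℝ)
    (x : Fin 3 → ℝ) (j : Fin 3) : ℝ :=
  ∑ i, fderiv ℝ (fun y => m y i j) x (Pi.single i 1)

theorem sum_eps_mul_sum_mul_eps (Y : Fin 3 → ℂ) (i : Fin 3) :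
    ∑ a, ∑ b, (eps i a b : ℂ) * ∑ j, Y j * eps j a b = 2 * Y i := by
  fin_cases i <;> simp [Fin.sum_univ_three, eps] <;> ring

theorem sum_eps_mul_sum_sum_mul_eps_mul (D : Fin 3 → Fin 3 → Fin 3 → ℂ) (c : Fin 3 → ℂ) :
    ∑ i, ∑ a, ∑ b, (eps i a b : ℂ) * ∑ j, ∑ k, D i j k * eps j a b * c k
      = ∑ k, 2 * (∑ i, D i i k) * c k := by
  have inner : ∀ i a b, ∑ j, ∑ k, D i j k * eps j a b * c k
      = ∑ j, (∑ k, D i j k * c k) * eps j a b := fun i a b => by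
    simp only [Finset.sum_mul, mul_right_comm]
  simp only [inner, sum_eps_mul_sum_mul_eps]
  simp only [Finset.mul_sum, Finset.sum_mul]
  rw [Finset.sum_comm]
  simp only [mul_assoc]

section
variable {E : Type*} [NormedAddCommGroup E] [NormedSpace ℝ E] {x : E}

theorem fderiv_ofReal_add_I_mul {f g : E → ℝ} (hf : DifferentiableAt ℝ f x)
    (hg : DifferentiableAt ℝ g x) (v : E) :
    fderiv ℝ (fun y => (f y : ℂ) + Complex.I * g y) x v
      = fderiv ℝ f x v + Complex.I * fderiv ℝ g x v := by
  have hf' : HasFDerivAt (fun y => (f y : ℂ)) (Complex.ofRealCLM.comp (fderiv ℝ f x)) x :=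
    Complex.ofRealCLM.hasFDerivAt.comp x hf.hasFDerivAt
  have hg' : HasFDerivAt (fun y => (g y : ℂ)) (Complex.ofRealCLM.comp (fderiv ℝ g x)) x :=
    Complex.ofRealCLM.hasFDerivAt.comp x hg.hasFDerivAt
  rw [(hf'.fun_add (hg'.const_mul Complex.I)).fderiv]
  simp

theorem fderiv_sum_sum_mul_mul {𝔸 : Type*} [NormedCommRing 𝔸] [NormedAlgebra ℝ 𝔸]
    {ι κ : Type*} [Fintype ι] [Fintype κ] {u : ι → κ → E → 𝔸} (c : ι → 𝔸) (d : κ → 𝔸)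
    (hu : ∀ j k, DifferentiableAt ℝ (u j k) x) (v : E) :
    fderiv ℝ (fun y => ∑ j, ∑ k, u j k y * c j * d k) x v
      = ∑ j, ∑ k, fderiv ℝ (u j k) x v * c j * d k := by
  rw [fderiv_fun_sum fun j _ => by fun_prop, sum_apply]
  refine Finset.sum_congr rfl fun j _ => ?_
  rw [fderiv_fun_sum fun k _ => by fun_prop, sum_apply]
  refine Finset.sum_congr rfl fun k _ => ?_
  rw [fderiv_mul_const ((hu j k).mul_const _), fderiv_mul_const (hu j k)]
  simp only [smul_apply, smul_eq_mul]
  ring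

end

theorem stmt_6_general
    (m n : (Fin 3 → ℝ) → Matrix (Fin 3) (Fin 3) ℝ)
    (hm_diff : ∀ j k, Differentiable ℝ (fun x => m x j k))
    (hn_diff : ∀ j k, Differentiable ℝ (fun x => n x j k)) :
    ∀ (x : Fin 3 → ℝ) (p q : Fin 3),
      ∑ i, ∑ a, ∑ b, (eps i a b : ℂ) *
        fderiv ℝ (fun y => ∑ j, ∑ k,
            ((m y j k : ℂ) + Complex.I * (n y j k : ℂ)) * (eps j a b : ℂ) * (eps k p q : ℂ))
          x (Pi.single i 1)
      = ∑ j, 2 * ((divHat m x j : ℂ) + Complex.I * (divHat n x j : ℂ)) * (eps j p q : ℂ) := by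
  intro x p q
  have hu : ∀ j k, DifferentiableAt ℝ (fun y => (m y j k : ℂ) + Complex.I * n y j k) x :=
    fun j k => by fun_prop
  simp only [fderiv_sum_sum_mul_mul _ _ hu,
    fderiv_ofReal_add_I_mul (hm_diff _ _ x) (hn_diff _ _ x), sum_eps_mul_sum_sum_mul_eps_mul]
  simp only [divHat, Complex.ofReal_sum, Finset.sum_add_distrib, Finset.mul_sum]

/-- On `ℝ³` with the flat connection, the first-order operator
`d_i(u) = Σᵢ dxⁱ ∇_{∂ᵢ} u` intertwines the isomorphisms `φ₂, φ₃` with the symmetric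
traceless divergence: `d_i(φ₂(m ⊕ n)) = φ₃(div̂ m ⊕ div̂ n)`.  In components relative to
the frames `dx^a∧dx^b ⊗ dx^p∧dx^q` and `dx¹∧dx²∧dx³ ⊗ dx^p∧dx^q` this is the identity
`Σ_{i,a,b} ε_{iab} ∂ᵢ[(m_{jk}+i n_{jk}) ε_{jab} ε_{kpq}] = 2((div̂ m)ⱼ + i(div̂ n)ⱼ) ε_{jpq}`
(summed over repeated indices). -/
theorem stmt_6
    (m n : (Fin 3 → ℝ) → Matrix (Fin 3) (Fin 3) ℝ)
    (hm_diff : ∀ j k, Differentiable ℝ (fun x => m x j k))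
    (hn_diff : ∀ j k, Differentiable ℝ (fun x => n x j k))
    (hm_symm : ∀ x j k, m x j k = m x k j)
    (hn_symm : ∀ x j k, n x j k = n x k j)
    (hm_tr : ∀ x, ∑ j, m x j j = 0)
    (hn_tr : ∀ x, ∑ j, n x j j = 0) :
    ∀ (x : Fin 3 → ℝ) (p q : Fin 3),
      ∑ i, ∑ a, ∑ b, (eps i a b : ℂ) *
        fderiv ℝ (fun y => ∑ j, ∑ k,
            ((m y j k : ℂ) + Complex.I * (n y j k : ℂ)) * (eps j a b : ℂ) * (eps k p q : ℂ))
          x (Pi.single i 1)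
      = ∑ j, 2 * ((divHat m x j : ℂ) + Complex.I * (divHat n x j : ℂ)) * (eps j p q : ℂ) :=
  stmt_6_general m n hm_diff hn_diff
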